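/- Let v ∈ ℝ^ℕ, ω₀ ∈ ℝⁿ, m ∈ ℕ, and let P_k be the matrix polynomials from the derivative recursion of ω̇ = (A + u(t)B)ω. If there exists i ≥ 1 with C B^{m+1} P_{i-1}(v) ω₀ ≠ 0, then there exists k₀ ∈ ℕ such that for every N ≥ 1, the map φ : ℝ^{k₀+N} → ℝ^N, φ(w) = (C B^m P_{k₀}(w) ω₀, ..., C B^m P_{k₀+N-1}(w) ω₀), has differential of rank N at (v₀, ..., v_{k₀+N-1}). -/

import Mathlib

open MvPolynomial Matrix Finset

/-- The matrix-valued polynomials `P_k`: `P₀ = I`,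
`P_{k+1} = P_k (A + X₀B) + Σ_{i<k} (∂P_k/∂X_i) X_{i+1}`. -/
noncomputable def Pmat {n : ℕ} (A B : Matrix (Fin n) (Fin n) ℝ) :
    ℕ → Matrix (Fin n) (Fin n) (MvPolynomial ℕ ℝ)
  | 0 => 1
  | k + 1 =>
      Pmat A B k *
          ((A.map fun r => (MvPolynomial.C r : MvPolynomial ℕ ℝ)) +
            (MvPolynomial.X 0 : MvPolynomial ℕ ℝ) • (B.map fun r => (MvPolynomial.C r : MvPolynomial ℕ ℝ)))
        + ∑ i ∈ Finset.range k,
            (MvPolynomial.X (i + 1) : MvPolynomial ℕ ℝ) • (Pmat A B k).map fun q => MvPolynomial.pderiv i q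

/-- The map `φ : ℝ^{k₀+N} → ℝ^N`, `w ↦ (C Bᵐ P_{k₀+r}(w) ω₀)_{r<N}`, where a tuple
`w ∈ ℝ^{k₀+N}` is extended by zero to all indeterminates. -/
noncomputable def phiMap {n : ℕ} (A B : Matrix (Fin n) (Fin n) ℝ)
    (Cm : Matrix (Fin 1) (Fin n) ℝ) (m k₀ N : ℕ) (ω₀ : Fin n → ℝ)
    (w : Fin (k₀ + N) → ℝ) : Fin N → ℝ := fun r =>
  ((((Cm.map fun x => (MvPolynomial.C x : MvPolynomial ℕ ℝ)) *
        (B.map fun x => (MvPolynomial.C x : MvPolynomial ℕ ℝ)) ^ m *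
        Pmat A B (k₀ + (r : ℕ))).map fun q =>
          MvPolynomial.eval (fun j => if h : j < k₀ + N then w ⟨j, h⟩ else 0) q).mulVec
      ω₀) 0

namespace S18

abbrev Rp := MvPolynomial ℕ ℝ

variable {n : ℕ}

/-- entrywise partial derivative of a polynomial matrix -/
noncomputable def Dm (j : ℕ) (W : Matrix (Fin n) (Fin n) Rp) : Matrix (Fin n) (Fin n) Rp :=
  W.map fun q => MvPolynomial.pderiv j q

noncomputable def Mx (A B : Matrix (Fin n) (Fin n) ℝ) : Matrix (Fin n) (Fin n) Rp :=
  (A.map fun r => (MvPolynomial.C r : Rp)) +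
    (MvPolynomial.X 0 : Rp) • (B.map fun r => (MvPolynomial.C r : Rp))

noncomputable def Bp (B : Matrix (Fin n) (Fin n) ℝ) : Matrix (Fin n) (Fin n) Rp :=
  B.map fun r => (MvPolynomial.C r : Rp)

/-- `qm i k = ∂_{X_k} P_{i+k}` ; this is `Q_i^{i+k}` in the paper. -/
noncomputable def qm (A B : Matrix (Fin n) (Fin n) ℝ) (i k : ℕ) : Matrix (Fin n) (Fin n) Rp :=
  Dm k (Pmat A B (i + k))

lemma qm_def (A B : Matrix (Fin n) (Fin n) ℝ) (i k : ℕ) :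
    qm A B i k = Dm k (Pmat A B (i + k)) := rfl

lemma Dm_apply (j : ℕ) (W : Matrix (Fin n) (Fin n) Rp) (a b : Fin n) :
    Dm j W a b = MvPolynomial.pderiv j (W a b) := rfl

lemma Dm_add (j : ℕ) (U V : Matrix (Fin n) (Fin n) Rp) :
    Dm j (U + V) = Dm j U + Dm j V := by
  ext a b; simp [Dm_apply, Matrix.add_apply]

lemma Dm_zero (j : ℕ) : Dm j (0 : Matrix (Fin n) (Fin n) Rp) = 0 := by
  ext a b; simp [Dm_apply]

lemma Dm_sum {α : Type*} (j : ℕ) (s : Finset α) (f : α → Matrix (Fin n) (Fin n) Rp) :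
    Dm j (∑ t ∈ s, f t) = ∑ t ∈ s, Dm j (f t) := by
  ext a b; simp [Dm_apply, Matrix.sum_apply]

lemma Dm_mul (j : ℕ) (U V : Matrix (Fin n) (Fin n) Rp) :
    Dm j (U * V) = Dm j U * V + U * Dm j V := by
  ext a b
  simp only [Dm_apply, Matrix.mul_apply, Matrix.add_apply, Matrix.map_apply, map_sum, pderiv_mul]
  rw [Finset.sum_add_distrib]

lemma Dm_smul (j : ℕ) (x : Rp) (W : Matrix (Fin n) (Fin n) Rp) :
    Dm j (x • W) = (MvPolynomial.pderiv j x) • W + x • Dm j W := by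
  ext a b
  simp only [Dm_apply, Matrix.smul_apply, smul_eq_mul, pderiv_mul, Matrix.add_apply]

lemma Dm_smul_real (j : ℕ) (r : ℝ) (W : Matrix (Fin n) (Fin n) Rp) :
    Dm j (r • W) = r • Dm j W := by
  ext a b
  simp only [Dm_apply, Matrix.smul_apply]
  rw [MvPolynomial.smul_eq_C_mul, MvPolynomial.smul_eq_C_mul, pderiv_C_mul]

lemma pderiv_comm (i j : ℕ) (p : Rp) :
    MvPolynomial.pderiv i (MvPolynomial.pderiv j p) =
      MvPolynomial.pderiv j (MvPolynomial.pderiv i p) := by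
  induction p using MvPolynomial.induction_on with
  | C a => simp
  | add p q hp hq => simp [map_add, hp, hq]
  | mul_X p s hp =>
      have hds : ∀ u : ℕ, MvPolynomial.pderiv u (MvPolynomial.X s : Rp) =
          MvPolynomial.C (if s = u then (1:ℝ) else 0) := by
        intro u
        by_cases h : s = u
        · subst h; simp
        · rw [pderiv_X_of_ne h, if_neg h, map_zero]
      simp only [pderiv_mul, map_add, hds, pderiv_C, hp]
      ring

lemma Dm_comm (i j : ℕ) (W : Matrix (Fin n) (Fin n) Rp) :
    Dm i (Dm j W) = Dm j (Dm i W) := by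
  ext a b; simp [Dm_apply, pderiv_comm]

/-! ### supported machinery -/

lemma supp_pderiv {s : Set ℕ} {p : Rp} (h : p ∈ MvPolynomial.supported ℝ s) (j : ℕ) :
    MvPolynomial.pderiv j p ∈ MvPolynomial.supported ℝ s := by
  refine Algebra.adjoin_induction (fun x hx => ?_) (fun r => ?_)
    (fun x y hx hy ihx ihy => ?_) (fun x y hx hy ihx ihy => ?_) h
  · obtain ⟨t, ht, rfl⟩ := hx
    by_cases hjt : t = j
    · subst hjt; rw [pderiv_X_self]; exact one_mem _
    · rw [pderiv_X_of_ne hjt]; exact zero_mem _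
  · rw [MvPolynomial.algebraMap_eq, pderiv_C]; exact zero_mem _
  · rw [map_add]; exact add_mem ihx ihy
  · rw [pderiv_mul]; exact add_mem (mul_mem ihx hy) (mul_mem hx ihy)

lemma supp_pderiv_zero {s : Set ℕ} {p : Rp} (h : p ∈ MvPolynomial.supported ℝ s) {j : ℕ}
    (hj : j ∉ s) : MvPolynomial.pderiv j p = 0 := by
  refine Algebra.adjoin_induction (fun x hx => ?_) (fun r => ?_)
    (fun x y hx hy ihx ihy => ?_) (fun x y hx hy ihx ihy => ?_) h
  · obtain ⟨t, ht, rfl⟩ := hx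
    exact pderiv_X_of_ne (fun h => hj (h ▸ ht))
  · rw [MvPolynomial.algebraMap_eq, pderiv_C]
  · rw [map_add, ihx, ihy, add_zero]
  · rw [pderiv_mul, ihx, ihy, zero_mul, mul_zero, add_zero]

lemma supp_eval_congr {s : Set ℕ} {p : Rp} (h : p ∈ MvPolynomial.supported ℝ s)
    {f g : ℕ → ℝ} (hfg : ∀ t ∈ s, f t = g t) :
    MvPolynomial.eval f p = MvPolynomial.eval g p := by
  refine Algebra.adjoin_induction (fun x hx => ?_) (fun r => ?_)
    (fun x y hx hy ihx ihy => ?_) (fun x y hx hy ihx ihy => ?_) h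
  · obtain ⟨t, ht, rfl⟩ := hx
    simp [hfg t ht]
  · simp [MvPolynomial.algebraMap_eq]
  · simp [map_add, ihx, ihy]
  · simp [_root_.map_mul, ihx, ihy]

/-- supportedness of a polynomial matrix : all entries supported on `{t | t < s}`. -/
def Sp (s : ℕ) (W : Matrix (Fin n) (Fin n) Rp) : Prop :=
  ∀ a b, W a b ∈ MvPolynomial.supported ℝ (Set.Iio s)

lemma Sp.mono {s s' : ℕ} (hss : s ≤ s') {W : Matrix (Fin n) (Fin n) Rp} (h : Sp s W) :
    Sp s' W := fun a b =>
  MvPolynomial.supported_mono (Set.Iio_subset_Iio hss) (h a b)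

lemma Sp.add {s : ℕ} {U V : Matrix (Fin n) (Fin n) Rp} (hU : Sp s U) (hV : Sp s V) :
    Sp s (U + V) := fun a b => by
  rw [Matrix.add_apply]; exact add_mem (hU a b) (hV a b)

lemma Sp.mul {s : ℕ} {U V : Matrix (Fin n) (Fin n) Rp} (hU : Sp s U) (hV : Sp s V) :
    Sp s (U * V) := fun a b => by
  rw [Matrix.mul_apply]
  exact sum_mem (fun c _ => mul_mem (hU a c) (hV c b))

lemma Sp.sum {α : Type*} {s : ℕ} {t : Finset α} {f : α → Matrix (Fin n) (Fin n) Rp}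
    (hf : ∀ x ∈ t, Sp s (f x)) : Sp s (∑ x ∈ t, f x) := fun a b => by
  rw [Matrix.sum_apply]
  exact sum_mem (fun c hc => hf c hc a b)

lemma Sp.smul {s : ℕ} {x : Rp} (hx : x ∈ MvPolynomial.supported ℝ (Set.Iio s))
    {W : Matrix (Fin n) (Fin n) Rp} (hW : Sp s W) : Sp s (x • W) := fun a b => by
  rw [Matrix.smul_apply, smul_eq_mul]; exact mul_mem hx (hW a b)

lemma Sp.zero {s : ℕ} : Sp s (0 : Matrix (Fin n) (Fin n) Rp) := fun a b => by
  simp only [Matrix.zero_apply]; exact zero_mem _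

lemma Sp.Dm {s : ℕ} (j : ℕ) {W : Matrix (Fin n) (Fin n) Rp} (hW : Sp s W) :
    Sp s (Dm j W) := fun a b => supp_pderiv (hW a b) j

lemma Sp.Bp {s : ℕ} (B : Matrix (Fin n) (Fin n) ℝ) : Sp s (Bp B) := fun a b => by
  simp only [S18.Bp, Matrix.map_apply, ← MvPolynomial.algebraMap_eq]
  exact Subalgebra.algebraMap_mem _ _

lemma Sp.Mx {s : ℕ} (hs : 1 ≤ s) (A B : Matrix (Fin n) (Fin n) ℝ) : Sp s (Mx A B) := by
  apply Sp.add
  · intro a b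
    simp only [Matrix.map_apply, ← MvPolynomial.algebraMap_eq]
    exact Subalgebra.algebraMap_mem _ _
  · apply Sp.smul
    · exact MvPolynomial.X_mem_supported.2 (by simp; omega)
    · exact Sp.Bp B

lemma Dm_eq_zero {s : ℕ} {W : Matrix (Fin n) (Fin n) Rp} (hW : Sp s W) {j : ℕ} (hj : s ≤ j) :
    Dm j W = 0 := by
  refine Matrix.ext (fun a b => ?_)
  rw [Dm_apply, Matrix.zero_apply]
  exact supp_pderiv_zero (hW a b) (by simpa using not_lt.2 hj)

lemma suppP (A B : Matrix (Fin n) (Fin n) ℝ) : ∀ k, Sp k (Pmat A B k) := by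
  intro k
  induction k with
  | zero =>
      intro a b
      rw [show Pmat A B 0 = 1 from rfl]
      by_cases hab : a = b
      · subst hab; simp only [Matrix.one_apply_eq]; exact one_mem _
      · rw [Matrix.one_apply_ne hab]; exact zero_mem _
  | succ k ih =>
      rw [show Pmat A B (k+1) = Pmat A B k * Mx A B
          + ∑ t ∈ Finset.range k, (MvPolynomial.X (t + 1) : Rp) • Dm t (Pmat A B k) from rfl]
      apply Sp.add
      · exact (ih.mono (Nat.le_succ k)).mul (Sp.Mx (Nat.succ_le_succ (Nat.zero_le k)) A B)
      · apply Sp.sum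
        intro t ht
        apply Sp.smul
        · exact MvPolynomial.X_mem_supported.2 (by simpa using Nat.succ_lt_succ (Finset.mem_range.1 ht))
        · exact (ih.mono (Nat.le_succ k)).Dm t



variable (A B : Matrix (Fin n) (Fin n) ℝ)

lemma P_succ (k : ℕ) :
    Pmat A B (k+1) = Pmat A B k * Mx A B
      + ∑ t ∈ Finset.range k, (MvPolynomial.X (t + 1) : Rp) • Dm t (Pmat A B k) := rfl

lemma Dm_Mx (j : ℕ) : Dm j (Mx A B) = if j = 0 then Bp B else 0 := by
  refine Matrix.ext (fun a b => ?_)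
  by_cases hj : j = 0
  · subst hj
    simp only [Dm_apply, Mx, if_pos rfl, Matrix.add_apply, Matrix.smul_apply, Matrix.map_apply,
      smul_eq_mul, map_add, pderiv_C, pderiv_mul, pderiv_X_self, Bp]
    simp
  · simp only [Dm_apply, Mx, if_neg hj, Matrix.add_apply, Matrix.smul_apply, Matrix.map_apply,
      smul_eq_mul, map_add, pderiv_C, pderiv_mul,
      pderiv_X_of_ne (fun h : (0:ℕ) = j => hj h.symm), Matrix.zero_apply]
    simp

lemma Dm_P_succ (j k : ℕ) :
    Dm j (Pmat A B (k+1)) = Dm j (Pmat A B k) * Mx A B + Pmat A B k * Dm j (Mx A B)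
      + ∑ t ∈ Finset.range k,
          ((MvPolynomial.pderiv j (MvPolynomial.X (t+1) : Rp)) • Dm t (Pmat A B k)
            + (MvPolynomial.X (t+1) : Rp) • Dm j (Dm t (Pmat A B k))) := by
  rw [P_succ, Dm_add, Dm_mul, Dm_sum]
  congr 1
  exact Finset.sum_congr rfl (fun t _ => Dm_smul j _ _)

lemma q0 (k : ℕ) : qm A B 0 k = 0 := by
  rw [qm_def, Nat.zero_add]
  exact Dm_eq_zero (suppP A B k) le_rfl

lemma qBASE (i : ℕ) :
    qm A B (i+1) 0 = qm A B i 0 * Mx A B + Pmat A B i * Bp B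
      + ∑ t ∈ Finset.range i, (MvPolynomial.X (t+1) : Rp) • Dm t (qm A B i 0) := by
  have h1 : qm A B (i+1) 0 = Dm 0 (Pmat A B (i+1)) := by rw [qm_def]
  have h2 : qm A B i 0 = Dm 0 (Pmat A B i) := by rw [qm_def, Nat.add_zero]
  rw [h1, Dm_P_succ, Dm_Mx, if_pos rfl, h2]
  congr 1
  refine Finset.sum_congr rfl (fun t ht => ?_)
  rw [pderiv_X_of_ne (by omega), Dm_comm]
  simp

lemma qREC (i k : ℕ) :
    qm A B (i+1) (k+1) = qm A B i (k+1) * Mx A B + qm A B (i+1) k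
      + ∑ t ∈ Finset.range (i+k+1), (MvPolynomial.X (t+1) : Rp) • Dm t (qm A B i (k+1)) := by
  have e1 : (i+1)+(k+1) = (i+k+1)+1 := by omega
  have e2 : i+(k+1) = i+k+1 := by omega
  have e3 : (i+1)+k = i+k+1 := by omega
  have h1 : qm A B (i+1) (k+1) = Dm (k+1) (Pmat A B ((i+k+1)+1)) := by rw [qm_def, e1]
  have h2 : qm A B i (k+1) = Dm (k+1) (Pmat A B (i+k+1)) := by rw [qm_def, e2]
  have h3 : qm A B (i+1) k = Dm k (Pmat A B (i+k+1)) := by rw [qm_def, e3]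
  rw [h1, Dm_P_succ, Dm_Mx, if_neg (by omega), mul_zero, add_zero, h2, h3]
  rw [Finset.sum_add_distrib]
  have hsum1 : ∑ t ∈ Finset.range (i+k+1),
      (MvPolynomial.pderiv (k+1) (MvPolynomial.X (t+1) : Rp)) • Dm t (Pmat A B (i+k+1))
      = Dm k (Pmat A B (i+k+1)) := by
    rw [Finset.sum_eq_single k]
    · rw [pderiv_X_self, one_smul]
    · intro t _ htk
      rw [pderiv_X_of_ne (by omega), zero_smul]
    · intro hk; exact absurd (Finset.mem_range.2 (by omega)) hk
  have hsum2 : ∀ t ∈ Finset.range (i+k+1),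
      (MvPolynomial.X (t+1) : Rp) • Dm (k+1) (Dm t (Pmat A B (i+k+1)))
      = (MvPolynomial.X (t+1) : Rp) • Dm t (Dm (k+1) (Pmat A B (i+k+1))) := by
    intro t _; rw [Dm_comm]
  rw [Finset.sum_congr rfl hsum2, hsum1]
  abel

lemma qm1 : ∀ k, qm A B 1 k = Bp B := by
  intro k
  induction k with
  | zero =>
      rw [show (1:ℕ) = 0 + 1 from rfl, qBASE, q0, zero_mul, zero_add]
      simp [show Pmat A B 0 = 1 from rfl]
  | succ k ih =>
      rw [show (1:ℕ) = 0 + 1 from rfl] at ih ⊢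
      rw [qREC, q0, zero_mul, zero_add, ih]
      simp [Dm_zero]

lemma suppQ : ∀ i, ∀ k, Sp i (qm A B (i+1) k) := by
  intro i
  induction i with
  | zero => intro k; rw [qm1]; exact Sp.Bp B
  | succ i ihi =>
      intro k
      induction k with
      | zero =>
          rw [qBASE]
          apply Sp.add
          apply Sp.add
          · exact ((ihi 0).mono (Nat.le_succ i)).mul (Sp.Mx (by omega) A B)
          · exact ((suppP A B (i+1)).mono le_rfl).mul (Sp.Bp B)
          · apply Sp.sum
            intro t ht
            by_cases hti : t < i
            · apply Sp.smul
              · exact MvPolynomial.X_mem_supported.2 (by simp; omega)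
              · exact ((ihi 0).Dm t).mono (Nat.le_succ i)
            · rw [Dm_eq_zero (ihi 0) (by omega), smul_zero]
              exact Sp.zero
      | succ k ihk =>
          rw [qREC]
          apply Sp.add
          apply Sp.add
          · exact ((ihi (k+1)).mono (Nat.le_succ i)).mul (Sp.Mx (by omega) A B)
          · exact ihk
          · apply Sp.sum
            intro t ht
            by_cases hti : t < i
            · apply Sp.smul
              · exact MvPolynomial.X_mem_supported.2 (by simp; omega)
              · exact ((ihi (k+1)).Dm t).mono (Nat.le_succ i)
            · rw [Dm_eq_zero (ihi (k+1)) (by omega), smul_zero]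
              exact Sp.zero


lemma Dm_Bp (t : ℕ) : Dm t (Bp B) = 0 := by
  refine Matrix.ext (fun a b => ?_)
  simp [Dm_apply, Bp]

/-- The linear operator `W ↦ W·M + ∑_{t<i} X_{t+1} ∂_t W`. -/
noncomputable def Fop (i : ℕ) :
    Matrix (Fin n) (Fin n) Rp →ₗ[ℝ] Matrix (Fin n) (Fin n) Rp where
  toFun W := W * Mx A B + ∑ t ∈ Finset.range i, (MvPolynomial.X (t+1) : Rp) • Dm t W
  map_add' U V := by
    simp only [add_mul, Dm_add, smul_add, Finset.sum_add_distrib]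
    abel
  map_smul' r W := by
    simp only [RingHom.id_apply, smul_mul_assoc, Dm_smul_real, smul_comm r, Finset.smul_sum,
      smul_add]

lemma Fop_apply (i : ℕ) (W : Matrix (Fin n) (Fin n) Rp) :
    Fop A B i W = W * Mx A B + ∑ t ∈ Finset.range i, (MvPolynomial.X (t+1) : Rp) • Dm t W := rfl

lemma FopBP (i : ℕ) : Fop A B i (Bp B * Pmat A B i) = Bp B * Pmat A B (i+1) := by
  rw [Fop_apply, P_succ, mul_add, Finset.mul_sum, mul_assoc]
  congr 1
  refine Finset.sum_congr rfl (fun t _ => ?_)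
  rw [Dm_mul, Dm_Bp, zero_mul, zero_add, Matrix.mul_smul]

lemma pasc (k j : ℕ) : (((k+1).choose (j+1) : ℕ) : ℝ) = (k.choose j : ℝ) + (k.choose (j+1) : ℝ) := by
  rw [Nat.choose_succ_succ]
  push_cast
  ring

lemma sumchoose (j : ℕ) : ∀ k, ∑ t ∈ Finset.range k, (((t+1).choose j : ℕ) : ℝ)
    = (((k+1).choose (j+1) : ℕ) : ℝ) - ((Nat.choose 1 (j+1) : ℕ) : ℝ) := by
  intro k
  induction k with
  | zero => simp
  | succ k ih =>
      rw [Finset.sum_range_succ, ih, pasc (k+1) j]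
      ring

lemma POLY : ∀ i, ∃ b : ℕ → Matrix (Fin n) (Fin n) Rp,
    (∀ k, qm A B (i+1) k = ∑ j ∈ Finset.range (i+1), ((Nat.choose k j : ℕ) : ℝ) • b j)
    ∧ b i = Bp B * Pmat A B i := by
  intro i
  induction i with
  | zero =>
      refine ⟨fun _ => Bp B * Pmat A B 0, fun k => ?_, rfl⟩
      rw [qm1]
      simp [show Pmat A B 0 = 1 from rfl]
  | succ i ih =>
      obtain ⟨b, hb, htop⟩ := ih
      have key : ∀ k, qm A B (i+2) (k+1)
          = qm A B (i+2) k + Fop A B i (qm A B (i+1) (k+1)) := by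
        intro k
        rw [show i+2 = (i+1)+1 from rfl, qREC]
        have trunc : ∑ t ∈ Finset.range (i+1+k+1),
            (MvPolynomial.X (t+1) : Rp) • Dm t (qm A B (i+1) (k+1))
            = ∑ t ∈ Finset.range i, (MvPolynomial.X (t+1) : Rp) • Dm t (qm A B (i+1) (k+1)) := by
          refine (Finset.sum_subset (Finset.range_subset_range.2 (by omega)) ?_).symm
          intro t _ ht
          rw [Dm_eq_zero (suppQ A B i (k+1)) (by simpa using ht), smul_zero]
        rw [trunc, Fop_apply]
        abel
      have tele : ∀ k, qm A B (i+2) k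
          = qm A B (i+2) 0 + ∑ t ∈ Finset.range k, Fop A B i (qm A B (i+1) (t+1)) := by
        intro k
        induction k with
        | zero => simp
        | succ k ihk => rw [key k, ihk, Finset.sum_range_succ]; abel
      have expand : ∀ k, qm A B (i+2) k = qm A B (i+2) 0
          + ∑ j ∈ Finset.range (i+1),
              ((((k+1).choose (j+1) : ℕ) : ℝ) - ((Nat.choose 1 (j+1) : ℕ) : ℝ)) • Fop A B i (b j) := by
        intro k
        rw [tele k]
        congr 1
        calc ∑ t ∈ Finset.range k, Fop A B i (qm A B (i+1) (t+1))
            = ∑ t ∈ Finset.range k, ∑ j ∈ Finset.range (i+1),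
                (((t+1).choose j : ℕ) : ℝ) • Fop A B i (b j) := by
              refine Finset.sum_congr rfl (fun t _ => ?_)
              rw [hb (t+1), map_sum]
              exact Finset.sum_congr rfl (fun j _ => (Fop A B i).map_smul _ _)
          _ = ∑ j ∈ Finset.range (i+1),
                (∑ t ∈ Finset.range k, (((t+1).choose j : ℕ) : ℝ)) • Fop A B i (b j) := by
              rw [Finset.sum_comm]
              exact Finset.sum_congr rfl (fun j _ => (Finset.sum_smul).symm)
          _ = _ := by
              refine Finset.sum_congr rfl (fun j _ => ?_)
              rw [sumchoose]
      refine ⟨fun j => if j = 0 then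
            ((qm A B (i+2) 0
              - ∑ l ∈ Finset.range (i+1), ((Nat.choose 1 (l+1) : ℕ) : ℝ) • Fop A B i (b l))
              + Fop A B i (b 0))
          else ((if j ≤ i then Fop A B i (b j) else 0)
              + (if j - 1 ≤ i then Fop A B i (b (j-1)) else 0)), ?_, ?_⟩
      · intro k
        rw [expand k]
        have e1 : ∀ j ∈ Finset.range (i+1),
            ((((k+1).choose (j+1) : ℕ) : ℝ) - ((Nat.choose 1 (j+1) : ℕ) : ℝ)) • Fop A B i (b j)
            = ((k.choose j : ℕ) : ℝ) • Fop A B i (b j)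
              + ((k.choose (j+1) : ℕ) : ℝ) • Fop A B i (b j)
              - ((Nat.choose 1 (j+1) : ℕ) : ℝ) • Fop A B i (b j) := by
          intro j _
          rw [pasc k j, sub_smul, add_smul]
        rw [Finset.sum_congr rfl e1, Finset.sum_sub_distrib, Finset.sum_add_distrib]
        conv_rhs => rw [Finset.sum_range_succ']
        beta_reduce
        have hb0 : (if (0:ℕ) = 0 then
            ((qm A B (i+2) 0
              - ∑ l ∈ Finset.range (i+1), ((Nat.choose 1 (l+1) : ℕ) : ℝ) • Fop A B i (b l))
              + Fop A B i (b 0))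
          else ((if (0:ℕ) ≤ i then Fop A B i (b 0) else 0)
              + (if (0:ℕ) - 1 ≤ i then Fop A B i (b (0-1)) else 0)))
            = ((qm A B (i+2) 0
              - ∑ l ∈ Finset.range (i+1), ((Nat.choose 1 (l+1) : ℕ) : ℝ) • Fop A B i (b l))
              + Fop A B i (b 0)) := if_pos rfl
        rw [hb0]
        have e2 : ∀ j ∈ Finset.range (i+1),
            ((k.choose (j+1) : ℕ) : ℝ) • (if j + 1 = 0 then
              ((qm A B (i+2) 0
                - ∑ l ∈ Finset.range (i+1), ((Nat.choose 1 (l+1) : ℕ) : ℝ) • Fop A B i (b l))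
                + Fop A B i (b 0))
            else ((if j + 1 ≤ i then Fop A B i (b (j+1)) else 0)
                + (if j + 1 - 1 ≤ i then Fop A B i (b (j+1-1)) else 0)))
            = (if j + 1 ≤ i then ((k.choose (j+1) : ℕ) : ℝ) • Fop A B i (b (j+1)) else 0)
              + ((k.choose (j+1) : ℕ) : ℝ) • Fop A B i (b j) := by
          intro j hj
          rw [if_neg (Nat.succ_ne_zero j), Nat.add_sub_cancel,
            if_pos (Nat.lt_succ_iff.1 (Finset.mem_range.1 hj)), smul_add]
          congr 1
          split_ifs with h
          · rfl
          · rw [smul_zero]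
        rw [Finset.sum_congr rfl e2, Finset.sum_add_distrib]
        have e3 : ∑ j ∈ Finset.range (i+1),
            (if j + 1 ≤ i then ((k.choose (j+1) : ℕ) : ℝ) • Fop A B i (b (j+1)) else 0)
            = ∑ j ∈ Finset.range (i+1), ((k.choose j : ℕ) : ℝ) • Fop A B i (b j)
              - ((k.choose 0 : ℕ) : ℝ) • Fop A B i (b 0) := by
          rw [Finset.sum_range_succ, if_neg (by omega), add_zero]
          have e4 : ∀ j ∈ Finset.range i,
              (if j + 1 ≤ i then ((k.choose (j+1) : ℕ) : ℝ) • Fop A B i (b (j+1)) else 0)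
              = ((k.choose (j+1) : ℕ) : ℝ) • Fop A B i (b (j+1)) := by
            intro j hj
            rw [if_pos (show j + 1 ≤ i from Finset.mem_range.1 hj)]
          rw [Finset.sum_congr rfl e4]
          refine eq_sub_of_add_eq ?_
          exact (Finset.sum_range_succ' (fun j => ((Nat.choose k j : ℕ) : ℝ) • Fop A B i (b j)) i).symm
        rw [e3, Nat.choose_zero_right]
        push_cast
        rw [one_smul, one_smul]
        abel
      · beta_reduce
        rw [if_neg (Nat.succ_ne_zero i), if_neg (by omega), Nat.add_sub_cancel, if_pos le_rfl,
          zero_add, htop, FopBP]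


/-! ### the scalar functional `W ↦ C Bᵐ W(v) ω₀` -/

noncomputable def TL (B : Matrix (Fin n) (Fin n) ℝ) (Cm : Matrix (Fin 1) (Fin n) ℝ)
    (m : ℕ) (v : ℕ → ℝ) (ω₀ : Fin n → ℝ) :
    Matrix (Fin n) (Fin n) Rp →ₗ[ℝ] ℝ where
  toFun W := ∑ c, (∑ d, (Cm * B ^ m) 0 d * MvPolynomial.eval v (W d c)) * ω₀ c
  map_add' U V := by
    simp only [Matrix.add_apply, map_add, mul_add, add_mul, Finset.sum_add_distrib]
  map_smul' r W := by
    simp only [Matrix.smul_apply, MvPolynomial.smul_eq_C_mul, _root_.map_mul,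
      MvPolynomial.eval_C, RingHom.id_apply, smul_eq_mul]
    rw [Finset.mul_sum]
    refine Finset.sum_congr rfl fun c _ => ?_
    rw [Finset.sum_mul, Finset.sum_mul, Finset.mul_sum]
    refine Finset.sum_congr rfl fun d _ => ?_
    ring

lemma TL_eq (B : Matrix (Fin n) (Fin n) ℝ) (Cm : Matrix (Fin 1) (Fin n) ℝ)
    (m : ℕ) (v : ℕ → ℝ) (ω₀ : Fin n → ℝ) (W : Matrix (Fin n) (Fin n) Rp) :
    TL B Cm m v ω₀ W
      = (((((Cm * B ^ m).map (fun r => (MvPolynomial.C r : Rp))) * W).map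
          (fun q => MvPolynomial.eval v q)).mulVec ω₀) 0 := by
  show ∑ c, (∑ d, (Cm * B ^ m) 0 d * MvPolynomial.eval v (W d c)) * ω₀ c = _
  simp only [Matrix.mulVec, dotProduct, Matrix.map_apply, Matrix.mul_apply, map_sum,
    _root_.map_mul, MvPolynomial.eval_C]

lemma mapCB (B : Matrix (Fin n) (Fin n) ℝ) (Cm : Matrix (Fin 1) (Fin n) ℝ) (m : ℕ) :
    (Cm.map (fun r => (MvPolynomial.C r : Rp)))
        * ((B.map (fun r => (MvPolynomial.C r : Rp)))) ^ m
      = (Cm * B ^ m).map (fun r => (MvPolynomial.C r : Rp)) := by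
  have hB : (B.map fun r => (MvPolynomial.C r : Rp))
      = (MvPolynomial.C : ℝ →+* Rp).mapMatrix B := rfl
  have hpow : ((B.map fun r => (MvPolynomial.C r : Rp))) ^ m
      = (B ^ m).map (fun r => (MvPolynomial.C r : Rp)) := by
    rw [hB, ← map_pow]
    rfl
  rw [hpow, ← Matrix.map_mul]

lemma TL_BP (A B : Matrix (Fin n) (Fin n) ℝ) (Cm : Matrix (Fin 1) (Fin n) ℝ)
    (m : ℕ) (v : ℕ → ℝ) (ω₀ : Fin n → ℝ) (l : ℕ) :
    TL B Cm m v ω₀ (Bp B * Pmat A B l)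
      = ((((Cm.map fun x => (MvPolynomial.C x : Rp)) *
              (B.map fun x => (MvPolynomial.C x : Rp)) ^ (m + 1) *
              Pmat A B l).map fun q => MvPolynomial.eval v q).mulVec ω₀) 0 := by
  have hmat : ((Cm * B ^ m).map (fun r => (MvPolynomial.C r : Rp))) * (Bp B * Pmat A B l)
      = (Cm.map fun x => (MvPolynomial.C x : Rp))
          * (B.map fun x => (MvPolynomial.C x : Rp)) ^ (m + 1) * Pmat A B l := by
    conv_rhs => rw [mapCB B Cm (m+1), pow_succ, ← Matrix.mul_assoc Cm _ B,
      Matrix.map_mul, Matrix.mul_assoc]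
    rfl
  rw [TL_eq, hmat]

/-! ### eventual nonvanishing of nonzero polynomials on ℕ -/

lemma exists_eventual (f : Polynomial ℝ) (hf : f ≠ 0) :
    ∃ K : ℕ, ∀ k, K ≤ k → f.eval (k : ℝ) ≠ 0 := by
  have hfin : {x : ℝ | f.IsRoot x}.Finite := Polynomial.finite_setOf_isRoot hf
  have hfin2 : {k : ℕ | f.eval (k : ℝ) = 0}.Finite := by
    have hsub : {k : ℕ | f.eval (k : ℝ) = 0}
        ⊆ (fun k : ℕ => (k : ℝ)) ⁻¹' {x | f.IsRoot x} := fun k hk => hk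
    exact (hfin.preimage (Set.injOn_of_injective Nat.cast_injective)).subset hsub
  obtain ⟨K, hK⟩ := hfin2.bddAbove
  refine ⟨K + 1, fun k hk hzero => ?_⟩
  have := hK hzero
  omega

/-! ### the scalar values as a polynomial in `k` -/

noncomputable def fpol (B : Matrix (Fin n) (Fin n) ℝ) (Cm : Matrix (Fin 1) (Fin n) ℝ)
    (m : ℕ) (v : ℕ → ℝ) (ω₀ : Fin n → ℝ) (i : ℕ) (b : ℕ → Matrix (Fin n) (Fin n) Rp) :
    Polynomial ℝ :=
  ∑ j ∈ Finset.range (i+1),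
    Polynomial.C ((j.factorial : ℝ)⁻¹ * TL B Cm m v ω₀ (b j)) * descPochhammer ℝ j

lemma fpol_eval (A B : Matrix (Fin n) (Fin n) ℝ) (Cm : Matrix (Fin 1) (Fin n) ℝ)
    (m : ℕ) (v : ℕ → ℝ) (ω₀ : Fin n → ℝ) (i : ℕ) (b : ℕ → Matrix (Fin n) (Fin n) Rp)
    (hb : ∀ k, qm A B (i+1) k = ∑ j ∈ Finset.range (i+1), ((Nat.choose k j : ℕ) : ℝ) • b j)
    (k : ℕ) :
    TL B Cm m v ω₀ (qm A B (i+1) k) = (fpol B Cm m v ω₀ i b).eval (k : ℝ) := by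
  rw [hb k, map_sum, fpol, Polynomial.eval_finset_sum]
  refine Finset.sum_congr rfl fun j _ => ?_
  rw [_root_.map_smul, Polynomial.eval_mul, Polynomial.eval_C,
    descPochhammer_eval_eq_descFactorial, Nat.descFactorial_eq_factorial_mul_choose]
  have hjf : ((j.factorial : ℕ) : ℝ) ≠ 0 := Nat.cast_ne_zero.2 (Nat.factorial_ne_zero j)
  push_cast
  field_simp
  ring

lemma fpol_coeff (B : Matrix (Fin n) (Fin n) ℝ) (Cm : Matrix (Fin 1) (Fin n) ℝ)
    (m : ℕ) (v : ℕ → ℝ) (ω₀ : Fin n → ℝ) (i : ℕ) (b : ℕ → Matrix (Fin n) (Fin n) Rp) :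
    (fpol B Cm m v ω₀ i b).coeff i = (i.factorial : ℝ)⁻¹ * TL B Cm m v ω₀ (b i) := by
  rw [fpol, Polynomial.finset_sum_coeff, Finset.sum_range_succ]
  have h1 : ∀ j ∈ Finset.range i,
      (Polynomial.C ((j.factorial : ℝ)⁻¹ * TL B Cm m v ω₀ (b j)) * descPochhammer ℝ j).coeff i
        = 0 := by
    intro j hj
    rw [Polynomial.coeff_C_mul, Polynomial.coeff_eq_zero_of_natDegree_lt, mul_zero]
    rw [descPochhammer_natDegree]
    exact Finset.mem_range.1 hj
  rw [Finset.sum_congr rfl h1, Finset.sum_const_zero, zero_add, Polynomial.coeff_C_mul]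
  have h2 : (descPochhammer ℝ i).coeff i = 1 := by
    have := (monic_descPochhammer ℝ i).coeff_natDegree
    rwa [descPochhammer_natDegree] at this
  rw [h2, mul_one]

/-! ### derivative of `w ↦ eval (ext w) q` -/

lemma hasFDerivAt_evalExt (M : ℕ) (q : Rp) (x : Fin M → ℝ) :
    HasFDerivAt
      (fun w : Fin M → ℝ =>
        MvPolynomial.eval (fun t => if h : t < M then w ⟨t, h⟩ else 0) q)
      (∑ j : Fin M,
        (MvPolynomial.eval (fun t => if h : t < M then x ⟨t, h⟩ else 0)
          (MvPolynomial.pderiv (j : ℕ) q)) • (ContinuousLinearMap.proj j : (Fin M → ℝ) →L[ℝ] ℝ))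
      x := by
  induction q using MvPolynomial.induction_on with
  | C a =>
      simp only [MvPolynomial.eval_C, pderiv_C, map_zero, zero_smul, Finset.sum_const_zero]
      exact hasFDerivAt_const a x
  | add p r hp hr =>
      simp only [map_add, add_smul, Finset.sum_add_distrib]
      exact hp.add hr
  | mul_X p s hp =>
      have hds : ∀ u : ℕ, MvPolynomial.pderiv u (MvPolynomial.X s : Rp) =
          MvPolynomial.C (if s = u then (1:ℝ) else 0) := by
        intro u
        by_cases h : s = u
        · subst h; simp
        · rw [pderiv_X_of_ne h, if_neg h, map_zero]
      by_cases hs : s < M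
      · have hfun : (fun w : Fin M → ℝ =>
            MvPolynomial.eval (fun t => if h : t < M then w ⟨t, h⟩ else 0) (p * MvPolynomial.X s))
            = fun w : Fin M → ℝ =>
                (MvPolynomial.eval (fun t => if h : t < M then w ⟨t, h⟩ else 0) p) * w ⟨s, hs⟩ := by
          funext w
          rw [_root_.map_mul, MvPolynomial.eval_X, dif_pos hs]
        rw [hfun]
        have hmul := hp.mul (hasFDerivAt_apply (⟨s, hs⟩ : Fin M) x)
        refine hmul.congr_fderiv (Eq.symm ?_)
        refine ContinuousLinearMap.ext fun u => ?_
        simp only [ContinuousLinearMap.add_apply, ContinuousLinearMap.smul_apply,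
          ContinuousLinearMap.sum_apply, ContinuousLinearMap.proj_apply, smul_eq_mul,
          pderiv_mul, hds, map_add, _root_.map_mul, MvPolynomial.eval_X, MvPolynomial.eval_C]
        have hsplit : ∀ j : Fin M,
            ((MvPolynomial.eval (fun t => if h : t < M then x ⟨t, h⟩ else 0)
                (MvPolynomial.pderiv (j : ℕ) p))
              * (if h : (s:ℕ) < M then x ⟨s, h⟩ else 0)
              + (MvPolynomial.eval (fun t => if h : t < M then x ⟨t, h⟩ else 0) p)
                * (if s = (j:ℕ) then (1:ℝ) else 0)) * u j
            = x ⟨s, hs⟩ * ((MvPolynomial.eval (fun t => if h : t < M then x ⟨t, h⟩ else 0)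
                (MvPolynomial.pderiv (j : ℕ) p)) * u j)
              + (if j = (⟨s, hs⟩ : Fin M) then
                  (MvPolynomial.eval (fun t => if h : t < M then x ⟨t, h⟩ else 0) p) * u j else 0) := by
          intro j
          rw [dif_pos hs]
          by_cases hj : j = (⟨s, hs⟩ : Fin M)
          · subst hj
            rw [if_pos rfl, if_pos rfl]
            ring
          · rw [if_neg hj, if_neg (fun h : s = (j:ℕ) => hj (Fin.ext h.symm))]
            ring
        rw [Finset.sum_congr rfl (fun j _ => hsplit j), Finset.sum_add_distrib,
          ← Finset.mul_sum, Finset.sum_ite_eq' Finset.univ (⟨s, hs⟩ : Fin M)]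
        simp only [Finset.mem_univ, if_true]
        ring
      · have hfun : (fun w : Fin M → ℝ =>
            MvPolynomial.eval (fun t => if h : t < M then w ⟨t, h⟩ else 0) (p * MvPolynomial.X s))
            = fun _ : Fin M → ℝ => (0:ℝ) := by
          funext w
          rw [_root_.map_mul, MvPolynomial.eval_X, dif_neg hs, mul_zero]
        rw [hfun]
        have hzero : (∑ j : Fin M,
            (MvPolynomial.eval (fun t => if h : t < M then x ⟨t, h⟩ else 0)
              (MvPolynomial.pderiv (j : ℕ) (p * MvPolynomial.X s)))
              • (ContinuousLinearMap.proj j : (Fin M → ℝ) →L[ℝ] ℝ)) = 0 := by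
          refine Finset.sum_eq_zero fun j _ => ?_
          rw [pderiv_mul, hds, map_add, _root_.map_mul, MvPolynomial.eval_X, dif_neg hs,
            mul_zero, _root_.map_mul, MvPolynomial.eval_C,
            if_neg (fun h : s = (j:ℕ) => hs (h ▸ j.isLt)), mul_zero, add_zero, zero_smul]
        rw [hzero]
        exact hasFDerivAt_const 0 x

lemma TL_apply (B : Matrix (Fin n) (Fin n) ℝ) (Cm : Matrix (Fin 1) (Fin n) ℝ)
    (m : ℕ) (v : ℕ → ℝ) (ω₀ : Fin n → ℝ) (W : Matrix (Fin n) (Fin n) Rp) :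
    TL B Cm m v ω₀ W = ∑ c, (∑ d, (Cm * B ^ m) 0 d * MvPolynomial.eval v (W d c)) * ω₀ c := rfl

lemma phi_hasFDeriv (A B : Matrix (Fin n) (Fin n) ℝ) (Cm : Matrix (Fin 1) (Fin n) ℝ)
    (m : ℕ) (v : ℕ → ℝ) (ω₀ : Fin n → ℝ) (k₀ N : ℕ) :
    HasFDerivAt (phiMap A B Cm m k₀ N ω₀)
      (ContinuousLinearMap.pi (fun r : Fin N => ∑ j : Fin (k₀+N),
        (TL B Cm m v ω₀ (Dm (j:ℕ) (Pmat A B (k₀ + (r:ℕ)))))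
          • (ContinuousLinearMap.proj j : (Fin (k₀+N) → ℝ) →L[ℝ] ℝ)))
      (fun j : Fin (k₀ + N) => v (j : ℕ)) := by
  have hcomp : ∀ r : Fin N, HasFDerivAt (fun w => phiMap A B Cm m k₀ N ω₀ w r)
      (∑ j : Fin (k₀+N),
        (TL B Cm m v ω₀ (Dm (j:ℕ) (Pmat A B (k₀ + (r:ℕ)))))
          • (ContinuousLinearMap.proj j : (Fin (k₀+N) → ℝ) →L[ℝ] ℝ))
      (fun j : Fin (k₀ + N) => v (j : ℕ)) := by
    intro r
    set x : Fin (k₀+N) → ℝ := fun j => v (j:ℕ) with hxdef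
    set H : Matrix (Fin 1) (Fin n) Rp :=
      ((Cm * B ^ m).map fun y => (MvPolynomial.C y : Rp)) * Pmat A B (k₀ + (r:ℕ)) with hHdef
    have hfun : (fun w : Fin (k₀+N) → ℝ => phiMap A B Cm m k₀ N ω₀ w r)
        = fun w : Fin (k₀+N) → ℝ => ∑ c : Fin n,
            MvPolynomial.eval (fun t => if h : t < k₀ + N then w ⟨t, h⟩ else 0) (H 0 c) * ω₀ c := by
      funext w
      show ((((Cm.map fun y => (MvPolynomial.C y : Rp))
          * (B.map fun y => (MvPolynomial.C y : Rp)) ^ m * Pmat A B (k₀ + (r:ℕ))).map fun q =>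
            MvPolynomial.eval (fun t => if h : t < k₀ + N then w ⟨t, h⟩ else 0) q).mulVec ω₀) 0 = _
      rw [mapCB, ← hHdef]
      simp [Matrix.mulVec, dotProduct, Matrix.map_apply]
    rw [hfun]
    have hder := HasFDerivAt.fun_sum (u := Finset.univ)
      (fun (c : Fin n) _ => (hasFDerivAt_evalExt (k₀+N) (H 0 c) x).mul_const (ω₀ c))
    refine hder.congr_fderiv (Eq.symm ?_)
    refine ContinuousLinearMap.ext fun u => ?_
    simp only [ContinuousLinearMap.coe_comp', Function.comp_apply, ContinuousLinearMap.pi_apply,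
      ContinuousLinearMap.sum_apply, ContinuousLinearMap.smul_apply, ContinuousLinearMap.proj_apply,
      smul_eq_mul]
    have hcoeff : ∀ (j : Fin (k₀+N)) (c : Fin n),
        MvPolynomial.eval (fun t => if h : t < k₀ + N then x ⟨t, h⟩ else 0)
            (MvPolynomial.pderiv (j:ℕ) (H 0 c))
        = ∑ d, (Cm * B ^ m) 0 d
            * MvPolynomial.eval v (MvPolynomial.pderiv (j:ℕ) (Pmat A B (k₀ + (r:ℕ)) d c)) := by
      intro j c
      have hH : H 0 c = ∑ d, MvPolynomial.C ((Cm * B ^ m) 0 d) * Pmat A B (k₀ + (r:ℕ)) d c := by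
        simp [hHdef, Matrix.mul_apply, Matrix.map_apply]
      rw [hH, map_sum, map_sum]
      refine Finset.sum_congr rfl fun d _ => ?_
      rw [pderiv_C_mul, _root_.map_mul, MvPolynomial.eval_C]
      congr 1
      refine supp_eval_congr (supp_pderiv (suppP A B (k₀ + (r:ℕ)) d c) (j:ℕ)) ?_
      intro t ht
      have ht2 : t < k₀ + N := lt_of_lt_of_le ht (by have := r.isLt; omega)
      show (if h : t < k₀ + N then x ⟨t, h⟩ else 0) = v t
      rw [dif_pos ht2]
    calc ∑ j : Fin (k₀+N), TL B Cm m v ω₀ (Dm (j:ℕ) (Pmat A B (k₀ + (r:ℕ)))) * u j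
        = ∑ j : Fin (k₀+N), ∑ c, ((∑ d, (Cm * B^m) 0 d
            * MvPolynomial.eval v (MvPolynomial.pderiv (j:ℕ) (Pmat A B (k₀+(r:ℕ)) d c)))
              * ω₀ c) * u j := by
          refine Finset.sum_congr rfl fun j _ => ?_
          rw [TL_apply]
          simp only [Dm_apply]
          rw [Finset.sum_mul]
      _ = ∑ c, ∑ j : Fin (k₀+N), ((∑ d, (Cm * B^m) 0 d
            * MvPolynomial.eval v (MvPolynomial.pderiv (j:ℕ) (Pmat A B (k₀+(r:ℕ)) d c)))
              * ω₀ c) * u j := Finset.sum_comm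
      _ = ∑ c, ω₀ c * ∑ j : Fin (k₀+N),
            MvPolynomial.eval (fun t => if h : t < k₀ + N then x ⟨t, h⟩ else 0)
              (MvPolynomial.pderiv (j:ℕ) (H 0 c)) * u j := by
          refine Finset.sum_congr rfl fun c _ => ?_
          rw [Finset.mul_sum]
          refine Finset.sum_congr rfl fun j _ => ?_
          rw [hcoeff j c]
          ring
  exact hasFDerivAt_pi.2 hcomp

end S18

namespace S18

lemma lower_tri_surj {N : ℕ} (J : Matrix (Fin N) (Fin N) ℝ) (hdiag : ∀ r, J r r ≠ 0)
    (hupper : ∀ r s : Fin N, (r:ℕ) < (s:ℕ) → J r s = 0) :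
    Function.Surjective (Matrix.mulVecLin J) := by
  refine LinearMap.injective_iff_surjective.1 ?_
  refine (injective_iff_map_eq_zero _).2 fun z hz0 => ?_
  have hrow : ∀ r : Fin N, ∑ s, J r s * z s = 0 := by
    intro r
    have := congrFun hz0 r
    simpa [Matrix.mulVecLin_apply, Matrix.mulVec, dotProduct] using this
  have hzz : ∀ p : ℕ, ∀ hp : p < N, z ⟨p, hp⟩ = 0 := by
    intro p
    induction p using Nat.strong_induction_on with
    | _ p ih =>
      intro hp
      have h0 := hrow ⟨p, hp⟩
      have hsingle : ∑ s, J ⟨p,hp⟩ s * z s = J ⟨p,hp⟩ ⟨p,hp⟩ * z ⟨p,hp⟩ := by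
        refine Finset.sum_eq_single (M := ℝ) ((⟨p,hp⟩ : Fin N)) ?_ ?_
        · intro s _ hsne
          rcases lt_or_gt_of_ne (fun h : (s:ℕ) = p => hsne (Fin.ext h)) with hlt | hgt
          · have hzs := ih (s:ℕ) hlt s.isLt
            rw [Fin.eta] at hzs
            rw [hzs, mul_zero]
          · rw [hupper ⟨p,hp⟩ s hgt, zero_mul]
        · intro habs; exact absurd (Finset.mem_univ _) habs
      rw [hsingle] at h0
      exact (mul_eq_zero.1 h0).resolve_left (hdiag ⟨p,hp⟩)
  funext s
  have := hzz (s:ℕ) s.isLt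
  rwa [Fin.eta] at this

lemma surjL {M N : ℕ} (a : Fin N → Fin M → ℝ) (cs : Fin N → Fin M)
    (hd : ∀ r, a r (cs r) ≠ 0) (hu : ∀ r s : Fin N, (r:ℕ) < (s:ℕ) → a r (cs s) = 0) :
    Function.Surjective fun (u : Fin M → ℝ) (r : Fin N) => ∑ j, a r j * u j := by
  intro y
  obtain ⟨z, hz⟩ := lower_tri_surj (Matrix.of fun r s => a r (cs s)) hd hu y
  refine ⟨fun j => ∑ s : Fin N, if j = cs s then z s else 0, ?_⟩
  funext r
  have hswap : ∑ j, a r j * (∑ s : Fin N, if j = cs s then z s else 0)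
      = ∑ s : Fin N, a r (cs s) * z s := by
    calc ∑ j, a r j * (∑ s : Fin N, if j = cs s then z s else 0)
        = ∑ j, ∑ s : Fin N, (if j = cs s then a r j * z s else 0) := by
          refine Finset.sum_congr rfl fun j _ => ?_
          rw [Finset.mul_sum]
          refine Finset.sum_congr rfl fun s _ => ?_
          split_ifs with h
          · rfl
          · exact mul_zero _
      _ = ∑ s : Fin N, ∑ j, (if j = cs s then a r j * z s else 0) := Finset.sum_comm
      _ = ∑ s : Fin N, a r (cs s) * z s := by
          refine Finset.sum_congr rfl fun s _ => ?_
          rw [Finset.sum_ite_eq' Finset.univ (cs s) (fun j => a r j * z s),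
            if_pos (Finset.mem_univ _)]
  show ∑ j, a r j * _ = y r
  rw [hswap, ← hz]
  simp [Matrix.mulVecLin_apply, Matrix.mulVec, dotProduct]

end S18

open S18 in
set_option maxHeartbeats 1000000 in
/-- If there is `i ≥ 1` with `C B^{m+1} P_{i-1}(v) ω₀ ≠ 0`, then
there is `k₀` such that for all `N ≥ 1` the map
`φ(w) = (C Bᵐ P_{k₀}(w)ω₀, …, C Bᵐ P_{k₀+N-1}(w)ω₀)` has a rank-`N` (i.e. surjective)
differential at `(v₀, …, v_{k₀+N-1})`. -/
theorem statement18 {n : ℕ} (A B : Matrix (Fin n) (Fin n) ℝ)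
    (Cm : Matrix (Fin 1) (Fin n) ℝ) (m : ℕ) (v : ℕ → ℝ) (ω₀ : Fin n → ℝ)
    (hyp : ∃ i : ℕ, 1 ≤ i ∧
        ((((Cm.map fun x => (MvPolynomial.C x : MvPolynomial ℕ ℝ)) *
              (B.map fun x => (MvPolynomial.C x : MvPolynomial ℕ ℝ)) ^ (m + 1) *
              Pmat A B (i - 1)).map fun q =>
                MvPolynomial.eval v q).mulVec ω₀) 0 ≠ 0) :
    ∃ k₀ : ℕ, ∀ N : ℕ, 1 ≤ N →
      Function.Surjective
        ⇑(fderiv ℝ (phiMap A B Cm m k₀ N ω₀) (fun j : Fin (k₀ + N) => v (j : ℕ))) := by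
  classical
  obtain ⟨i₁, hi₁, hval⟩ := hyp
  have hval' : TL B Cm m v ω₀ (Bp B * Pmat A B (i₁ - 1)) ≠ 0 := by
    rw [TL_BP]; exact hval
  have hex : ∃ jj : ℕ, ∃ K : ℕ, ∀ k, K ≤ k → TL B Cm m v ω₀ (qm A B (jj+1) k) ≠ 0 := by
    obtain ⟨b, hb, htop⟩ := POLY A B (i₁ - 1)
    have hco : (fpol B Cm m v ω₀ (i₁-1) b).coeff (i₁-1) ≠ 0 := by
      rw [fpol_coeff, htop]
      exact mul_ne_zero (inv_ne_zero (Nat.cast_ne_zero.2 (Nat.factorial_ne_zero _))) hval'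
    have hf : fpol B Cm m v ω₀ (i₁-1) b ≠ 0 := by
      intro h; rw [h] at hco; simp at hco
    obtain ⟨K, hK⟩ := exists_eventual _ hf
    refine ⟨i₁ - 1, K, fun k hk => ?_⟩
    rw [fpol_eval A B Cm m v ω₀ (i₁-1) b hb k]
    exact hK k hk
  set j₀ := Nat.find hex with hj₀def
  obtain ⟨K, hK⟩ : ∃ K : ℕ, ∀ k, K ≤ k → TL B Cm m v ω₀ (qm A B (j₀+1) k) ≠ 0 :=
    Nat.find_spec hex
  have hmin : ∀ j, j < j₀ → ∀ k, TL B Cm m v ω₀ (qm A B (j+1) k) = 0 := by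
    intro j hj k
    have hnot := Nat.find_min hex hj
    push_neg at hnot
    obtain ⟨b, hb, htop⟩ := POLY A B j
    rw [fpol_eval A B Cm m v ω₀ j b hb k]
    by_cases hf : fpol B Cm m v ω₀ j b = 0
    · rw [hf]; simp
    · exfalso
      obtain ⟨K', hK'⟩ := exists_eventual _ hf
      obtain ⟨k', hk'1, hk'2⟩ := hnot K'
      exact hK' k' hk'1 (by rw [← fpol_eval A B Cm m v ω₀ j b hb k']; exact hk'2)
  refine ⟨K + (j₀ + 1), ?_⟩
  intro N hN
  set k₀ := K + (j₀ + 1) with hk₀def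
  have hder := phi_hasFDeriv A B Cm m v ω₀ k₀ N
  rw [HasFDerivAt.fderiv hder]
  have hfn : ⇑(ContinuousLinearMap.pi (fun r : Fin N => ∑ j : Fin (k₀+N),
        (TL B Cm m v ω₀ (Dm (j:ℕ) (Pmat A B (k₀ + (r:ℕ)))))
          • (ContinuousLinearMap.proj j : (Fin (k₀+N) → ℝ) →L[ℝ] ℝ)))
      = fun (u : Fin (k₀+N) → ℝ) (r : Fin N) =>
          ∑ j, TL B Cm m v ω₀ (Dm ((j : Fin (k₀+N)):ℕ) (Pmat A B (k₀ + (r:ℕ)))) * u j := by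
    funext u r
    simp [ContinuousLinearMap.pi_apply, ContinuousLinearMap.sum_apply,
      ContinuousLinearMap.smul_apply, ContinuousLinearMap.proj_apply, smul_eq_mul]
  rw [hfn]
  refine surjL (fun r j => TL B Cm m v ω₀ (Dm ((j : Fin (k₀+N)):ℕ) (Pmat A B (k₀ + (r:ℕ)))))
    (fun s => ⟨K + (s:ℕ), by have := s.isLt; omega⟩) ?_ ?_
  · intro r
    have he : (j₀+1) + (K + (r:ℕ)) = k₀ + (r:ℕ) := by omega
    have hq : qm A B (j₀+1) (K + (r:ℕ)) = Dm (K + (r:ℕ)) (Pmat A B (k₀ + (r:ℕ))) := by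
      rw [qm_def, he]
    show TL B Cm m v ω₀ (Dm (K + (r:ℕ)) (Pmat A B (k₀ + (r:ℕ)))) ≠ 0
    rw [← hq]
    exact hK (K + (r:ℕ)) (by omega)
  · intro r s hrs
    show TL B Cm m v ω₀ (Dm (K + (s:ℕ)) (Pmat A B (k₀ + (r:ℕ)))) = 0
    by_cases hbig : k₀ + (r:ℕ) ≤ K + (s:ℕ)
    · rw [Dm_eq_zero (suppP A B (k₀ + (r:ℕ))) hbig, map_zero]
    · have hj : ((j₀ + (r:ℕ)) - (s:ℕ)) < j₀ := by omega
      have he : ((j₀ + (r:ℕ) - (s:ℕ)) + 1) + (K + (s:ℕ)) = k₀ + (r:ℕ) := by omega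
      have hq : qm A B ((j₀ + (r:ℕ) - (s:ℕ)) + 1) (K + (s:ℕ))
          = Dm (K + (s:ℕ)) (Pmat A B (k₀ + (r:ℕ))) := by
        rw [qm_def, he]
      rw [← hq]
      exact hmin _ hj (K + (s:ℕ))
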